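/- Let R be a commutative ring, q ∈ R, A an associative unital R-algebra, and a, b ∈ A satisfying the q-commutation relation a*b - q•(b*a) = 1. Then for all natural numbers n and m: (b*a)^{n+m} = \sum_{j=0}^{m} \sum_{k=0}^{n} (S_q(m,j) * C(n,k) * ([j]_q)^{n-k} * q^{j*k}) • (b^j * (b*a)^k * a^j) (with the convention 0^0 = 1). -/

import Mathlib

/-- The q-integer [n]_q. -/
def qInt {R : Type*} [CommRing R] (q : R) (n : ℕ) : R :=
  ∑ i ∈ Finset.range n, q ^ i

/-- The q-Stirling numbers of the second kind. -/
def qStirling {R : Type*} [CommRing R] (q : R) : ℕ → ℕ → R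
  | 0, 0 => 1
  | 0, _ + 1 => 0
  | _ + 1, 0 => 0
  | n + 1, k + 1 => q ^ k * qStirling q n k + qInt q (k + 1) * qStirling q n (k + 1)

/-! Write `N := b * a`. The relation gives `N * b = b * (q • N + 1)`, so moving `b ^ j` to the left
through `N` turns `N` into `q ^ j • N + [j]_q`. In particular `N * (b ^ j * a ^ j)` is
`q ^ j • b ^ (j + 1) * a ^ (j + 1) + [j]_q • b ^ j * a ^ j`, which is exactly the recurrence of
`S_q`; hence `N ^ m = ∑ S_q(m, j) • b ^ j * a ^ j`. Finally
`N ^ n * b ^ j * a ^ j = b ^ j * (q ^ j • N + [j]_q) ^ n * a ^ j`, and the binomial theorem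
expands the middle factor. -/

section QNumbers

variable {R : Type*} [CommRing R] (q : R)

@[simp]
lemma qInt_zero : qInt q 0 = 0 := rfl

lemma qInt_succ (n : ℕ) : qInt q (n + 1) = qInt q n + q ^ n :=
  Finset.sum_range_succ _ n

lemma qStirling_eq_zero_of_lt {m k : ℕ} (h : m < k) : qStirling q m k = 0 := by
  induction m generalizing k with
  | zero => obtain ⟨k, rfl⟩ := Nat.exists_eq_add_of_lt h; rfl
  | succ m ih =>
    obtain ⟨k, rfl⟩ := Nat.exists_eq_add_of_lt (Nat.zero_lt_of_lt h)
    rw [zero_add, qStirling, ih (by omega), ih (by omega), mul_zero, mul_zero, add_zero]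

lemma sum_qStirling_succ {M : Type*} [AddCommMonoid M] [Module R M] (m : ℕ) (x : ℕ → M) :
    ∑ j ∈ Finset.range (m + 1), qStirling q m j • (q ^ j • x (j + 1) + qInt q j • x j) =
      ∑ j ∈ Finset.range (m + 2), qStirling q (m + 1) j • x j := by
  have hshift : ∑ j ∈ Finset.range (m + 1), (qInt q j * qStirling q m j) • x j =
      ∑ j ∈ Finset.range (m + 1), (qInt q (j + 1) * qStirling q m (j + 1)) • x (j + 1) := by
    rw [Finset.sum_range_succ', Finset.sum_range_succ (fun j => _ • x (j + 1)),
      qStirling_eq_zero_of_lt q m.lt_succ_self]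
    simp only [qInt_zero, zero_mul, mul_zero, zero_smul, add_zero]
  rw [Finset.sum_range_succ' _ (m + 1)]
  simp only [qStirling, smul_add, smul_smul, add_smul, Finset.sum_add_distrib, zero_smul, add_zero]
  rw [← hshift]
  simp only [mul_comm]

end QNumbers

lemma smul_add_smul_one_pow {R A : Type*} [CommRing R] [Ring A] [Algebra R A]
    (c d : R) (x : A) (n : ℕ) :
    (c • x + d • (1 : A)) ^ n =
      ∑ k ∈ Finset.range (n + 1), ((n.choose k : R) * d ^ (n - k) * c ^ k) • x ^ k := by
  rw [((Commute.one_right x).smul_right d).smul_left c |>.add_pow]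
  refine Finset.sum_congr rfl fun k _ => ?_
  rw [smul_pow, smul_pow, one_pow, smul_mul_assoc, mul_smul_comm, mul_one, ← nsmul_eq_mul',
    ← Nat.cast_smul_eq_nsmul R, smul_smul, smul_smul, mul_right_comm]

section QBoson

variable {R : Type*} [CommRing R] {q : R} {A : Type*} [Ring A] [Algebra R A] {a b : A}

lemma qBoson_number_mul_pow (h : a * b - q • (b * a) = 1) (j : ℕ) :
    b * a * b ^ j = b ^ j * (q ^ j • (b * a) + qInt q j • 1) := by
  induction j with
  | zero => simp
  | succ j ih =>
    have hab : a * b = 1 + q • (b * a) := sub_eq_iff_eq_add.mp h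
    rw [pow_succ, ← mul_assoc, ih, mul_assoc, add_mul, smul_mul_assoc, smul_mul_assoc, mul_assoc,
      hab, qInt_succ, mul_assoc (b ^ j)]
    congr 1
    simp only [mul_add, smul_add, add_smul, mul_smul_comm, mul_one, one_mul, smul_smul, pow_succ]
    abel

lemma qBoson_number_pow_mul_pow (h : a * b - q • (b * a) = 1) (n j : ℕ) :
    (b * a) ^ n * b ^ j = b ^ j * (q ^ j • (b * a) + qInt q j • 1) ^ n := by
  induction n with
  | zero => simp
  | succ n ih =>
    rw [pow_succ, mul_assoc, qBoson_number_mul_pow h, ← mul_assoc, ih, mul_assoc, ← pow_succ]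

lemma qBoson_number_pow_eq_sum_qStirling (h : a * b - q • (b * a) = 1) (m : ℕ) :
    (b * a) ^ m = ∑ j ∈ Finset.range (m + 1), qStirling q m j • (b ^ j * a ^ j) := by
  induction m with
  | zero => simp [qStirling]
  | succ m ih =>
    have hstep (j : ℕ) : b * a * (b ^ j * a ^ j) =
        q ^ j • (b ^ (j + 1) * a ^ (j + 1)) + qInt q j • (b ^ j * a ^ j) := by
      rw [← mul_assoc, qBoson_number_mul_pow h, mul_add, add_mul, mul_smul_comm, mul_smul_comm,
        smul_mul_assoc, smul_mul_assoc, mul_one, pow_succ b, pow_succ' a, mul_assoc, mul_assoc,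
        mul_assoc]
    rw [pow_succ', ih, Finset.mul_sum]
    simp only [mul_smul_comm, hstep]
    exact sum_qStirling_succ q m fun j => b ^ j * a ^ j

end QBoson

/-- Operator form of the q-Spivey formula. -/
theorem qBoson_spivey_operator {R : Type*} [CommRing R] (q : R) {A : Type*} [Ring A]
    [Algebra R A] (a b : A) (h : a * b - q • (b * a) = 1) (n m : ℕ) :
    (b * a) ^ (n + m) =
      ∑ j ∈ Finset.range (m + 1), ∑ k ∈ Finset.range (n + 1),
        (qStirling q m j * (Nat.choose n k : R) * (qInt q j) ^ (n - k) * q ^ (j * k)) •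
          (b ^ j * (b * a) ^ k * a ^ j) := by
  rw [pow_add, qBoson_number_pow_eq_sum_qStirling h m, Finset.mul_sum]
  refine Finset.sum_congr rfl fun j _ => ?_
  rw [mul_smul_comm, ← mul_assoc, qBoson_number_pow_mul_pow h, smul_add_smul_one_pow,
    Finset.mul_sum, Finset.sum_mul, Finset.smul_sum]
  refine Finset.sum_congr rfl fun k _ => ?_
  rw [mul_smul_comm, smul_mul_assoc, smul_smul, ← pow_mul]
  simp only [mul_assoc]
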